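/- arXiv:1705.00253 — 2 statements merged into one kernel-verified Lean document; each statement's English description precedes it below -/
import Mathlib

section
/- For the Beta distribution with integer parameters α ≥ 1 and β ≥ 1, and any x ∈ (0,1), the probability of sampling a value greater than x is at least (1-x)^(α+β-1). That is, 1 - F(x; α, β) ≥ (1-x)^(α+β-1), where F is the CDF of the Beta(α,β) distribution. -/
open intervalIntegral

/-- For the Beta distribution with integer parameters `a ≥ 1`, `b ≥ 1` and any
`x ∈ (0,1)`, the probability of sampling a value greater than `x` is at least
`(1-x)^(a+b-1)`, i.e. `1 - F(x; a, b) ≥ (1-x)^(a+b-1)` where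
`F(x;a,b) = B(x;a,b)/B(1;a,b)` and `B(x;a,b) = ∫₀ˣ t^(a-1)(1-t)^(b-1) dt`. -/
theorem beta_tail_lower_bound (a b : ℕ) (ha : 1 ≤ a) (hb : 1 ≤ b)
    (x : ℝ) (hx : x ∈ Set.Ioo (0:ℝ) 1) :
    1 - (∫ t in (0:ℝ)..x, t ^ (a - 1) * (1 - t) ^ (b - 1)) /
        (∫ t in (0:ℝ)..1, t ^ (a - 1) * (1 - t) ^ (b - 1))
      ≥ (1 - x) ^ (a + b - 1) := by
  obtain ⟨hx0, hx1⟩ := hx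
  set g : ℝ → ℝ := fun t => t ^ (a - 1) * (1 - t) ^ (b - 1) with hg
  have hgcont : Continuous g := by continuity
  have hc : (0:ℝ) < 1 - x := by linarith
  -- positivity of B(1)
  have hB1 : 0 < ∫ t in (0:ℝ)..1, g t := by
    apply intervalIntegral_pos_of_pos_on (hgcont.intervalIntegrable 0 1)
    · intro t ht
      have h1 : 0 < t := ht.1
      have h2 : 0 < 1 - t := by linarith [ht.2]
      exact mul_pos (pow_pos h1 _) (pow_pos h2 _)
    · norm_num
  -- substitution: (1-x)^(a+b-1) * B(1) = ∫ t in x..1, (t-x)^(a-1) (1-t)^(b-1)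
  have hsub : (∫ t in x..(1:ℝ), (t - x) ^ (a - 1) * (1 - t) ^ (b - 1))
      = (1 - x) ^ (a + b - 1) * ∫ t in (0:ℝ)..1, g t := by
    have h := intervalIntegral.integral_comp_mul_add
      (a := (0:ℝ)) (b := 1)
      (fun t => (t - x) ^ (a - 1) * (1 - t) ^ (b - 1)) (ne_of_gt hc) x
    simp only [mul_zero, zero_add, mul_one] at h
    have h1 : 1 - x + x = 1 := by ring
    rw [h1] at h
    have h2 : ∀ s : ℝ, ((1 - x) * s + x - x) ^ (a - 1) * (1 - ((1 - x) * s + x)) ^ (b - 1)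
        = (1 - x) ^ (a + b - 2) * g s := by
      intro s
      have e1 : (1 - x) * s + x - x = (1 - x) * s := by ring
      have e2 : 1 - ((1 - x) * s + x) = (1 - x) * (1 - s) := by ring
      rw [e1, e2, mul_pow, mul_pow, hg]
      have : (a - 1) + (b - 1) = a + b - 2 := by omega
      rw [← this, pow_add]
      ring
    simp only [h2] at h
    rw [intervalIntegral.integral_const_mul, smul_eq_mul,
      eq_inv_mul_iff_mul_eq₀ hc.ne'] at h
    rw [← h]
    have hab : a + b - 1 = 1 + (a + b - 2) := by omega
    rw [hab, pow_add, pow_one, mul_assoc]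
  -- monotonicity: ∫ (t-x)^(a-1)(1-t)^(b-1) ≤ ∫ g over x..1
  have hmono : (∫ t in x..(1:ℝ), (t - x) ^ (a - 1) * (1 - t) ^ (b - 1))
      ≤ ∫ t in x..(1:ℝ), g t := by
    apply intervalIntegral.integral_mono_on (le_of_lt hx1)
    · exact ((continuous_id.sub continuous_const).pow _ |>.mul
        ((continuous_const.sub continuous_id).pow _)).intervalIntegrable x 1
    · exact hgcont.intervalIntegrable x 1
    · intro t ht
      have h1 : 0 ≤ t - x := by linarith [ht.1]
      have h2 : 0 ≤ 1 - t := by linarith [ht.2]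
      have : (t - x) ^ (a - 1) ≤ t ^ (a - 1) := by
        apply pow_le_pow_left₀ h1; linarith
      exact mul_le_mul_of_nonneg_right this (pow_nonneg h2 _)
  -- additivity
  have hadd : (∫ t in (0:ℝ)..x, g t) + (∫ t in x..(1:ℝ), g t) = ∫ t in (0:ℝ)..1, g t :=
    intervalIntegral.integral_add_adjacent_intervals
      (hgcont.intervalIntegrable 0 x) (hgcont.intervalIntegrable x 1)
  have key : (1 - x) ^ (a + b - 1) * (∫ t in (0:ℝ)..1, g t)
      ≤ (∫ t in (0:ℝ)..1, g t) - ∫ t in (0:ℝ)..x, g t := by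
    rw [← hsub]; linarith
  have hfin : (1 - x) ^ (a + b - 1)
      ≤ ((∫ t in (0:ℝ)..1, g t) - ∫ t in (0:ℝ)..x, g t) / ∫ t in (0:ℝ)..1, g t := by
    rw [le_div_iff₀ hB1]; linarith
  rw [sub_div, div_self (ne_of_gt hB1)] at hfin
  exact hfin
end

section
/- For the Beta distribution with parameters α, β ≥ 1 and any fixed x ∈ (0,1), if α + β ≤ T for some finite T, then the probability of sampling a value greater than x is at least (1-x)^(T-1), which is strictly positive. -/
/-- For the Beta distribution with real parameters `α, β ≥ 1` and any fixed
`x ∈ (0,1)`, if `α + β ≤ T`, then the probability of sampling a value greater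
than `x` is at least `(1-x)^(T-1)`, which is strictly positive.  Here
`F(x;α,β) = B(x;α,β)/B(1;α,β)` with `B(x;α,β) = ∫₀ˣ t^(α-1)(1-t)^(β-1) dt`. -/
theorem beta_tail_lower_bound_of_le (α β T : ℝ) (hα : 1 ≤ α) (hβ : 1 ≤ β)
    (hT : α + β ≤ T) (x : ℝ) (hx : x ∈ Set.Ioo (0:ℝ) 1) :
    0 < (1 - x) ^ (T - 1) ∧
      1 - (∫ t in (0:ℝ)..x, t ^ (α - 1) * (1 - t) ^ (β - 1)) /
          (∫ t in (0:ℝ)..1, t ^ (α - 1) * (1 - t) ^ (β - 1))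
        ≥ (1 - x) ^ (T - 1) := by
  obtain ⟨hx0, hx1⟩ := hx
  set c : ℝ := 1 - x with hc
  have hc0 : 0 < c := by simp only [hc]; linarith
  have hc1 : c ≤ 1 := by simp only [hc]; linarith
  have hcpow : 0 < c ^ (T - 1) := Real.rpow_pos_of_pos hc0 _
  refine ⟨hcpow, ?_⟩
  set f : ℝ → ℝ := fun t => t ^ (α - 1) * (1 - t) ^ (β - 1) with hf
  have hfc : Continuous f := by
    apply Continuous.mul
    · exact continuous_id.rpow_const (fun t => Or.inr (by linarith))
    · exact (continuous_const.sub continuous_id).rpow_const (fun t => Or.inr (by linarith))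
  have hInt : ∀ a b : ℝ, IntervalIntegrable f MeasureTheory.volume a b :=
    fun a b => hfc.intervalIntegrable a b
  have hsplit : (∫ t in (0:ℝ)..x, f t) + ∫ t in x..1, f t = ∫ t in (0:ℝ)..1, f t :=
    intervalIntegral.integral_add_adjacent_intervals (hInt 0 x) (hInt x 1)
  have hDpos : 0 < ∫ t in (0:ℝ)..1, f t := by
    apply intervalIntegral.intervalIntegral_pos_of_pos_on (hInt 0 1) ?_ one_pos
    intro t ht
    exact mul_pos (Real.rpow_pos_of_pos ht.1 _)
      (Real.rpow_pos_of_pos (by linarith [ht.2]) _)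
  -- substitution t = c * s + x
  have hsub : ∫ s in (0:ℝ)..1, f (c * s + x) = c⁻¹ * ∫ t in x..1, f t := by
    have h := intervalIntegral.integral_comp_mul_add f hc0.ne' x (a := (0:ℝ)) (b := 1)
    simpa [hc, smul_eq_mul] using h
  have htail : ∫ t in x..1, f t = c * ∫ s in (0:ℝ)..1, f (c * s + x) := by
    rw [hsub]; field_simp
  -- pointwise bound on [0,1]
  have hpt : ∀ s ∈ Set.Icc (0:ℝ) 1, c ^ (β - 1) * f s ≤ f (c * s + x) := by
    intro s hs
    have hs0 := hs.1; have hs1 := hs.2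
    have h1 : 1 - (c * s + x) = c * (1 - s) := by simp only [hc]; ring
    have h2 : f (c * s + x) = (c * s + x) ^ (α - 1) * (c ^ (β - 1) * (1 - s) ^ (β - 1)) := by
      simp only [hf, h1]
      rw [Real.mul_rpow hc0.le (by linarith)]
    have h3 : s ^ (α - 1) ≤ (c * s + x) ^ (α - 1) := by
      apply Real.rpow_le_rpow hs0 _ (by linarith)
      nlinarith
    have h4 : (0:ℝ) ≤ c ^ (β - 1) * (1 - s) ^ (β - 1) :=
      mul_nonneg (Real.rpow_nonneg hc0.le _) (Real.rpow_nonneg (by linarith) _)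
    calc c ^ (β - 1) * f s = s ^ (α - 1) * (c ^ (β - 1) * (1 - s) ^ (β - 1)) := by
          simp only [hf]; ring
      _ ≤ (c * s + x) ^ (α - 1) * (c ^ (β - 1) * (1 - s) ^ (β - 1)) :=
          mul_le_mul_of_nonneg_right h3 h4
      _ = f (c * s + x) := h2.symm
  have hmono : c ^ (β - 1) * ∫ s in (0:ℝ)..1, f s ≤ ∫ s in (0:ℝ)..1, f (c * s + x) := by
    rw [← intervalIntegral.integral_const_mul]
    have hlin : Continuous fun s : ℝ => c * s + x :=
      (continuous_const.mul continuous_id).add continuous_const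
    exact intervalIntegral.integral_mono_on zero_le_one
      ((continuous_const.mul hfc).intervalIntegrable _ _)
      ((hfc.comp hlin).intervalIntegrable _ _) hpt
  have htail_ge : c ^ β * ∫ t in (0:ℝ)..1, f t ≤ ∫ t in x..1, f t := by
    have hcb : c ^ β = c * c ^ (β - 1) := by
      have h := Real.rpow_add hc0 1 (β - 1)
      rw [Real.rpow_one] at h
      rw [show (1:ℝ) + (β - 1) = β by ring] at h
      exact h
    rw [htail, hcb, mul_assoc]
    exact mul_le_mul_of_nonneg_left hmono hc0.le
  have hTb : c ^ (T - 1) ≤ c ^ β := Real.rpow_le_rpow_of_exponent_ge hc0 hc1 (by linarith)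
  have key : c ^ (T - 1) ≤ (∫ t in x..1, f t) / ∫ t in (0:ℝ)..1, f t := by
    rw [le_div_iff₀ hDpos]
    calc c ^ (T - 1) * ∫ t in (0:ℝ)..1, f t
        ≤ c ^ β * ∫ t in (0:ℝ)..1, f t := mul_le_mul_of_nonneg_right hTb hDpos.le
      _ ≤ _ := htail_ge
  have heq : 1 - (∫ t in (0:ℝ)..x, f t) / (∫ t in (0:ℝ)..1, f t)
      = (∫ t in x..1, f t) / ∫ t in (0:ℝ)..1, f t := by
    field_simp
    linarith [hsplit]
  rw [ge_iff_le, heq]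
  exact key
end
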